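/- Let A be a field of characteristic zero, B a finite-dimensional commutative A-algebra all of whose residue fields are A, and π : B → A an A-algebra homomorphism. Let F ⊆ L be field extensions of A and e : F → L ⊗[A] B an A-algebra homomorphism such that π^L ∘ e is the inclusion F ↪ L. Then there exist a field extension L' of L and an A-algebra homomorphism e' : L' → L' ⊗[A] B such that: (i) π^{L'} ∘ e' = id_{L'}; (ii) e' extends e, i.e., the restriction of e' to F equals the composite of e with the natural map L ⊗[A] B → L' ⊗[A] B; and (iii) for every A-algebra homomorphism ρ : B → A, the map ρ^{L'} ∘ e' : L' → L' is bijective. -/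

import Mathlib

universe u

/-- For an `A`-algebra homomorphism `ρ : B →ₐ[A] A`, the induced `A`-algebra homomorphism
`ρ^L : L ⊗[A] B → L`, determined by `l ⊗ b ↦ l • ρ b`. -/
noncomputable def rhoHom (A L B : Type*) [CommSemiring A] [CommRing L] [Algebra A L]
    [CommRing B] [Algebra A B] (ρ : B →ₐ[A] A) : TensorProduct A L B →ₐ[A] L :=
  (Algebra.TensorProduct.rid A A L).toAlgHom.comp
    (Algebra.TensorProduct.map (AlgHom.id A L) ρ)

/-- A field extension of `A` equipped with an `A`-algebra homomorphism into its base change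
by `B` (the data underlying a `D`-field structure). -/
structure DRingData (A B : Type u) [Field A] [CommRing B] [Algebra A B] :
    Type (u + 1) where
  carrier : Type u
  [fieldCarrier : Field carrier]
  [algCarrier : Algebra A carrier]
  hom : carrier →ₐ[A] TensorProduct A carrier B

attribute [instance] DRingData.fieldCarrier DRingData.algCarrier

/-!
Take for `L'` an algebraically closed extension `K` of `L` of cardinality larger than that of `L`.
For every `ρ`, the embeddings `F ⊆ L ⊆ K` and `ρ^L ∘ e : F → L ⊆ K` differ by an automorphism
`σ_ρ` of `K` (match transcendence bases, which have cardinality `#K`); for `ρ = π` take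
`σ_π = id`, as `π^L ∘ e` is the inclusion. Since all residue fields of `B` are `A`, the map
`K ⊗[A] B → ∏_ρ K`, `z ↦ (ρ^K z)_ρ`, is surjective with nilpotent kernel, while `K / F` is
formally smooth in characteristic zero. Hence `(σ_ρ)_ρ` lifts to `e' : K → K ⊗[A] B` extending
`e`, and then `ρ^K ∘ e' = σ_ρ` is bijective for every `ρ`.
-/

open Cardinal Function TensorProduct Algebra.TensorProduct

section rhoHom

variable {A B : Type*} [CommRing A] [CommRing B] [Algebra A B]

lemma rhoHom_tmul {L : Type*} [CommRing L] [Algebra A L] (ρ : B →ₐ[A] A) (l : L) (b : B) :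
    rhoHom A L B ρ (l ⊗ₜ b) = ρ b • l := by
  simp [rhoHom]

lemma rhoHom_algebraMap {L : Type*} [CommRing L] [Algebra A L] (ρ : B →ₐ[A] A) (l : L) :
    rhoHom A L B ρ (algebraMap L (L ⊗[A] B) l) = l := by
  simp [Algebra.TensorProduct.algebraMap_apply, rhoHom_tmul]

lemma rhoHom_comp_includeRight {L : Type*} [CommRing L] [Algebra A L] (ρ : B →ₐ[A] A) :
    (rhoHom A L B ρ).comp includeRight = (Algebra.ofId A L).comp ρ := by
  ext b
  simp [rhoHom_tmul, Algebra.smul_def]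

lemma rhoHom_map {L K : Type*} [CommRing L] [Algebra A L] [CommRing K] [Algebra A K]
    (ι : L →ₐ[A] K) (ρ : B →ₐ[A] A) (z : L ⊗[A] B) :
    rhoHom A K B ρ (map ι (AlgHom.id A B) z) = ι (rhoHom A L B ρ z) := by
  induction z with
  | zero => simp
  | tmul l b => simp [rhoHom_tmul]
  | add x y hx hy => simp only [map_add, hx, hy]

lemma ker_rhoHom {L : Type*} [CommRing L] [Algebra A L] (ρ : B →ₐ[A] A) :
    RingHom.ker (rhoHom A L B ρ) = (RingHom.ker ρ).map (includeRight : B →ₐ[A] L ⊗[A] B) := by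
  rw [← lTensor_ker (A := L) ρ fun a => ⟨algebraMap A B a, ρ.commutes a⟩, rhoHom]
  ext z
  simp [RingHom.mem_ker]

end rhoHom

lemma RingHom.pi_surjective_of_isCoprime_ker {I R : Type*} {S : I → Type*} [_root_.Finite I]
    [CommRing R] [∀ i, Ring (S i)] (f : ∀ i, R →+* S i) (hf : ∀ i, Surjective (f i))
    (hcop : Pairwise (IsCoprime on fun i => RingHom.ker (f i))) :
    Surjective (RingHom.pi f) := by
  intro y
  choose x hx using fun i => hf i (y i)
  obtain ⟨r, hr⟩ := Ideal.exists_forall_sub_mem_ideal hcop x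
  refine ⟨r, funext fun i => ?_⟩
  rw [RingHom.pi_apply, ← hx i, ← sub_eq_zero, ← map_sub]
  exact hr i

section kerAlgHom

variable {A B : Type*} [CommRing A] [CommRing B] [Algebra A B]

lemma injective_ker_algHom : Injective fun ρ : B →ₐ[A] A => RingHom.ker ρ := by
  intro ρ ρ' h
  ext b
  have hb : b - algebraMap A B (ρ b) ∈ RingHom.ker ρ := by simp [RingHom.mem_ker]
  rw [show RingHom.ker ρ = RingHom.ker ρ' from h, RingHom.mem_ker, map_sub, AlgHom.commutes,
    sub_eq_zero] at hb
  exact hb.symm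

lemma exists_algHom_ker_eq {m : Ideal B}
    (hm : Bijective (algebraMap A (B ⧸ m))) : ∃ ρ : B →ₐ[A] A, RingHom.ker ρ = m := by
  refine ⟨(AlgEquiv.ofBijective (Algebra.ofId A (B ⧸ m)) hm).symm.toAlgHom.comp
    (Ideal.Quotient.mkₐ A m), ?_⟩
  ext b
  simp [RingHom.mem_ker, Ideal.Quotient.eq_zero_iff_mem]

end kerAlgHom

section baseChange

variable {A B : Type*} [Field A] [CommRing B] [Algebra A B]
variable {K : Type*} [Field K] [Algebra A K]

lemma isMaximal_ker_rhoHom (ρ : B →ₐ[A] A) : (RingHom.ker (rhoHom A K B ρ)).IsMaximal :=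
  RingHom.ker_isMaximal_of_surjective _ fun k => ⟨_, rhoHom_algebraMap ρ k⟩

lemma comap_ker_rhoHom (ρ : B →ₐ[A] A) :
    (RingHom.ker (rhoHom A K B ρ)).comap (includeRight : B →ₐ[A] K ⊗[A] B) = RingHom.ker ρ := by
  ext b
  have := AlgHom.congr_fun (rhoHom_comp_includeRight (L := K) ρ) b
  rw [AlgHom.comp_apply, AlgHom.comp_apply] at this
  rw [Ideal.mem_comap, RingHom.mem_ker, RingHom.mem_ker, this]
  exact map_eq_zero_iff _ (algebraMap A K).injective

lemma pairwise_isCoprime_ker_rhoHom :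
    Pairwise (IsCoprime on fun ρ : B →ₐ[A] A => RingHom.ker (rhoHom A K B ρ)) := by
  intro ρ ρ' h
  have := isMaximal_ker_rhoHom (K := K) ρ
  have := isMaximal_ker_rhoHom (K := K) ρ'
  refine Ideal.isCoprime_of_isMaximal fun heq => h (injective_ker_algHom ?_)
  simp only [← comap_ker_rhoHom (K := K), heq]

lemma surjective_pi_rhoHom [Finite (B →ₐ[A] A)] :
    Surjective (RingHom.pi fun ρ : B →ₐ[A] A => (rhoHom A K B ρ : K ⊗[A] B →+* K)) :=
  RingHom.pi_surjective_of_isCoprime_ker _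
    (fun ρ k => ⟨_, rhoHom_algebraMap ρ k⟩) pairwise_isCoprime_ker_rhoHom

lemma exists_ker_rhoHom_le [IsArtinianRing B]
    (hres : ∀ m : Ideal B, m.IsMaximal → Function.Bijective (algebraMap A (B ⧸ m)))
    (P : Ideal (K ⊗[A] B)) [P.IsPrime] : ∃ ρ : B →ₐ[A] A, RingHom.ker (rhoHom A K B ρ) ≤ P := by
  have hmax : (P.comap (includeRight : B →ₐ[A] K ⊗[A] B)).IsMaximal :=
    IsArtinianRing.isMaximal_of_isPrime _
  obtain ⟨ρ, hρ⟩ := exists_algHom_ker_eq (hres _ hmax)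
  refine ⟨ρ, ?_⟩
  rw [ker_rhoHom, hρ]
  exact Ideal.map_comap_le

lemma isNilpotent_ker_pi_rhoHom [FiniteDimensional A B]
    (hres : ∀ m : Ideal B, m.IsMaximal → Function.Bijective (algebraMap A (B ⧸ m))) :
    IsNilpotent (RingHom.ker
      (RingHom.pi fun ρ : B →ₐ[A] A => (rhoHom A K B ρ : K ⊗[A] B →+* K))) := by
  have : IsArtinianRing B := isArtinian_of_tower A inferInstance
  have : IsNoetherianRing (K ⊗[A] B) := isNoetherian_of_tower K inferInstance
  rw [Ideal.FG.isNilpotent_iff_le_nilradical (IsNoetherian.noetherian _), nilradical_eq_sInf]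
  refine le_sInf fun P hP => ?_
  have : P.IsPrime := hP
  obtain ⟨ρ, hρ⟩ := exists_ker_rhoHom_le hres P
  refine le_trans (fun z hz => ?_) hρ
  exact congr_fun hz ρ

end baseChange

section fields

lemma Algebra.FormallySmooth.of_charZero (F K : Type*) [Field F] [CharZero F] [Field K]
    [Algebra F K] : Algebra.FormallySmooth F K := by
  obtain ⟨s, hs⟩ := exists_isTranscendenceBasis F K
  have : Algebra.IsAlgebraic (IntermediateField.adjoin F (Set.range ((↑) : s → K))) K :=
    hs.isAlgebraic_field
  exact .of_algebraicIndependent_of_isSeparable hs.1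

lemma exists_ringHom_lift_of_charZero {F K C T : Type*} [Field F] [CharZero F] [Field K]
    [CommRing C] [CommRing T] (i : F →+* K) (j : F →+* C) (Φ : C →+* T)
    (hΦ : Surjective Φ) (hnil : IsNilpotent (RingHom.ker Φ)) (g : K →+* T)
    (hg : Φ.comp j = g.comp i) : ∃ e : K →+* C, Φ.comp e = g ∧ e.comp i = j := by
  let : Algebra F K := i.toAlgebra
  let : Algebra F C := j.toAlgebra
  let : Algebra F T := (Φ.comp j).toAlgebra
  have := Algebra.FormallySmooth.of_charZero F K
  let Φ' : C →ₐ[F] T := { Φ with commutes' := fun _ => rfl }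
  let g' : K →ₐ[F] T := { g with commutes' := fun r => (RingHom.congr_fun hg r).symm }
  let e := Algebra.FormallySmooth.liftOfSurjective g' Φ' hΦ hnil
  exact ⟨e, congr_arg AlgHom.toRingHom
    (Algebra.FormallySmooth.comp_liftOfSurjective g' Φ' hΦ hnil), RingHom.ext e.commutes⟩

lemma mk_eq_mk_of_isTranscendenceBasis {F K ι : Type u} [Field F] [Field K] [Algebra F K]
    [IsAlgClosed K] {v : ι → K} (hv : IsTranscendenceBasis F v) (hK : max #F ℵ₀ < #K) :
    #K = #ι := by
  refine le_antisymm ?_ (mk_le_of_injective hv.1.injective)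
  have := IsAlgClosed.cardinal_le_max_transcendence_basis' v hv
  rw [max_right_comm] at this
  exact (le_max_iff.1 this).resolve_left hK.not_ge

lemma exists_ringEquiv_comp_eq {F K₁ K₂ : Type u} [Field F] [Field K₁] [Field K₂]
    [IsAlgClosed K₁] [IsAlgClosed K₂] (f₁ : F →+* K₁) (f₂ : F →+* K₂)
    (hK : max #F ℵ₀ < #K₁) (hK₁₂ : #K₁ = #K₂) :
    ∃ σ : K₁ ≃+* K₂, (σ : K₁ →+* K₂).comp f₁ = f₂ := by
  let : Algebra F K₁ := f₁.toAlgebra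
  let : Algebra F K₂ := f₂.toAlgebra
  obtain ⟨s, hs⟩ := exists_isTranscendenceBasis F K₁
  obtain ⟨t, ht⟩ := exists_isTranscendenceBasis F K₂
  obtain ⟨st⟩ := Cardinal.eq.1 <| (mk_eq_mk_of_isTranscendenceBasis hs hK).symm.trans <|
    hK₁₂.trans (mk_eq_mk_of_isTranscendenceBasis ht (hK₁₂ ▸ hK))
  let E := hs.1.aevalEquiv.symm.trans ((MvPolynomial.renameEquiv F st).trans ht.1.aevalEquiv)
  have := IsAlgClosed.isAlgClosure_of_transcendence_basis _ hs
  have := IsAlgClosed.isAlgClosure_of_transcendence_basis _ ht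
  refine ⟨IsAlgClosure.equivOfEquiv K₁ K₂ E.toRingEquiv, RingHom.ext fun x => ?_⟩
  change _ = algebraMap F K₂ x
  rw [RingHom.comp_apply, show f₁ x = algebraMap F K₁ x from rfl,
    IsScalarTower.algebraMap_apply F (Algebra.adjoin F (Set.range ((↑) : s → K₁))) K₁,
    RingEquiv.coe_toRingHom, IsAlgClosure.equivOfEquiv_algebraMap, AlgEquiv.coe_ringEquiv,
    AlgEquiv.commutes, ← IsScalarTower.algebraMap_apply]

lemma mk_lt_mk_algebraicClosure_fractionRing_mvPolynomial_set (L : Type u) [Field L] :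
    #L < #(AlgebraicClosure (FractionRing (MvPolynomial (Set L) L))) :=
  (cantor #L).trans_le <| mk_set (α := L) ▸ mk_le_of_injective
    ((algebraMap (FractionRing (MvPolynomial (Set L) L)) _).injective.comp <|
      (IsFractionRing.injective (MvPolynomial (Set L) L) _).comp MvPolynomial.X_injective)

end fields

theorem exists_inversive_hom_of_isAlgClosed {A B L : Type u} [Field A] [CharZero A] [CommRing B]
    [Algebra A B] [FiniteDimensional A B]
    (hres : ∀ m : Ideal B, m.IsMaximal → Function.Bijective (algebraMap A (B ⧸ m)))
    (π : B →ₐ[A] A) [Field L] [Algebra A L] (F : IntermediateField A L)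
    (e : F →ₐ[A] L ⊗[A] B) (he : ∀ x : F, rhoHom A L B π (e x) = x)
    {K : Type u} [Field K] [Algebra A K] [IsAlgClosed K] (ι : L →ₐ[A] K)
    (hK : max #F ℵ₀ < #K) :
    ∃ hom : K →ₐ[A] K ⊗[A] B,
      (∀ x, rhoHom A K B π (hom x) = x) ∧
      (∀ x : F, hom (ι x) = map ι (AlgHom.id A B) (e x)) ∧
      ∀ ρ : B →ₐ[A] A, Bijective fun x => rhoHom A K B ρ (hom x) := by
  have : CharZero F := charZero_of_injective_algebraMap (algebraMap A F).injective
  let ιF : F →+* K := (ι.comp F.val).toRingHom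
  let f : F →ₐ[A] K ⊗[A] B := (map ι (AlgHom.id A B)).comp e
  have hσ : ∀ ρ : B →ₐ[A] A, ∃ σ : K ≃+* K,
      (σ : K →+* K).comp ιF = (ι.comp ((rhoHom A L B ρ).comp e)).toRingHom ∧
        (ρ = π → σ = RingEquiv.refl K) := by
    intro ρ
    by_cases hρ : ρ = π
    · subst hρ
      exact ⟨RingEquiv.refl K, RingHom.ext fun x => by simp [ιF, he], fun _ => rfl⟩
    · obtain ⟨σ, hσ⟩ := exists_ringEquiv_comp_eq ιF _ hK rfl
      exact ⟨σ, hσ, (absurd · hρ)⟩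
  choose σ hσ hσπ using hσ
  obtain ⟨e', he'σ, he'ι⟩ := exists_ringHom_lift_of_charZero ιF f.toRingHom
    (RingHom.pi fun ρ => (rhoHom A K B ρ : K ⊗[A] B →+* K)) surjective_pi_rhoHom
    (isNilpotent_ker_pi_rhoHom hres) (RingHom.pi fun ρ => (σ ρ : K →+* K)) <| by
      ext x ρ
      change rhoHom A K B ρ (map ι (AlgHom.id A B) (e x)) = σ ρ (ιF x)
      rw [rhoHom_map]
      exact (RingHom.congr_fun (hσ ρ) x).symm
  have hcomp (ρ : B →ₐ[A] A) (x : K) : rhoHom A K B ρ (e' x) = σ ρ x :=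
    congr_fun (RingHom.congr_fun he'σ x) ρ
  let hom : K →ₐ[A] K ⊗[A] B :=
    { e' with
      commutes' := fun a => by simpa [ιF, f] using RingHom.congr_fun he'ι (algebraMap A F a) }
  refine ⟨hom, fun x => by simp [hom, hcomp, hσπ], fun x => RingHom.congr_fun he'ι x, fun ρ => ?_⟩
  convert (σ ρ).bijective
  exact hcomp ρ _

/-- Let `A` be a field of characteristic zero, `B` a finite-dimensional
commutative `A`-algebra all of whose residue fields are `A`, and `π : B → A` an `A`-algebra
homomorphism.  Let `F ⊆ L` be field extensions of `A` and `e : F → L ⊗[A] B` an `A`-algebra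
homomorphism with `π^L ∘ e` the inclusion `F ↪ L`.  Then there exist a field extension `L'`
of `L` and an `A`-algebra homomorphism `e' : L' → L' ⊗[A] B` such that (i) `π^{L'} ∘ e' = id`;
(ii) `e'` extends `e`; and (iii) `ρ^{L'} ∘ e' : L' → L'` is bijective for every `ρ : B → A`. -/
theorem exists_inversive_extension
    {A B L : Type u} [Field A] [CharZero A] [CommRing B] [Algebra A B]
    [FiniteDimensional A B]
    (hres : ∀ m : Ideal B, m.IsMaximal → Function.Bijective (algebraMap A (B ⧸ m)))
    (π : B →ₐ[A] A)
    [Field L] [Algebra A L]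
    (F : IntermediateField A L)
    (e : F →ₐ[A] TensorProduct A L B)
    (he : ∀ x : F, rhoHom A L B π (e x) = (x : L)) :
    ∃ (D : DRingData A B) (ι : L →ₐ[A] D.carrier),
      (∀ x : D.carrier, rhoHom A D.carrier B π (D.hom x) = x) ∧
      (∀ x : F, D.hom (ι x) = Algebra.TensorProduct.map ι (AlgHom.id A B) (e x)) ∧
      ∀ ρ : B →ₐ[A] A,
        Function.Bijective fun x : D.carrier => rhoHom A D.carrier B ρ (D.hom x) := by
  have : CharZero L := charZero_of_injective_algebraMap (algebraMap A L).injective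
  let K := AlgebraicClosure (FractionRing (MvPolynomial (Set L) L))
  have hK : max #F ℵ₀ < #K := by
    have hLK := mk_lt_mk_algebraicClosure_fractionRing_mvPolynomial_set L
    exact max_lt ((mk_le_of_injective Subtype.val_injective).trans_lt hLK)
      ((aleph0_le_mk L).trans_lt hLK)
  obtain ⟨hom, hπ, hext, hbij⟩ :=
    exists_inversive_hom_of_isAlgClosed hres π F e he (IsScalarTower.toAlgHom A L K) hK
  exact ⟨⟨K, hom⟩, _, hπ, hext, hbij⟩
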